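/- (Quantum duality theorem, partial correctness) Let 𝓔 be a quantum operation with dual 𝓔*, and M, N quantum predicates. Define WLP(𝓔, N) = I − 𝓔*(I − N). Then the partial correctness condition tr(Mρ) ≤ tr(N·𝓔(ρ)) + (tr(ρ) − tr(𝓔(ρ))) for all partial density operators ρ holds if and only if M ⊑ WLP(𝓔, N). -/

import Mathlib

open Matrix BigOperators ComplexOrder

/-! By cyclicity of the trace, `tr(𝓔*(A) ρ) = tr(A 𝓔(ρ))`, so the slack in the partial correctness
inequality at `ρ` is exactly `tr((WLP(𝓔, N) - M) ρ)`. A Hermitian matrix is positive semidefinite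
iff its trace against every positive `ρ` is nonnegative (test against `ρ = x x*`), and the
normalisation `tr ρ ≤ 1` costs nothing since that trace is linear in `ρ`. -/

namespace Matrix

section Trace

variable {m ι R : Type*} [Fintype m] [CommSemiring R]

theorem trace_mul_vecMulVec (A : Matrix m m R) (v w : m → R) :
    (A * vecMulVec v w).trace = w ⬝ᵥ (A *ᵥ v) := by
  rw [mul_vecMulVec, trace_vecMulVec, dotProduct_comm]

theorem trace_sum_mul_mul_mul_comm [Fintype ι] (E F : ι → Matrix m m R) (A ρ : Matrix m m R) :
    ((∑ k, F k * A * E k) * ρ).trace = (A * ∑ k, E k * ρ * F k).trace := by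
  simp only [Finset.sum_mul, Finset.mul_sum, trace_sum]
  refine Finset.sum_congr rfl fun k _ => ?_
  simp only [mul_assoc]
  rw [trace_mul_comm (F k)]
  simp only [mul_assoc]

end Trace

section Positivity

variable {m 𝕜 : Type*} [Fintype m] [RCLike 𝕜] {A ρ : Matrix m m 𝕜}

theorem PosSemidef.trace_mul_nonneg (hA : A.PosSemidef) (hρ : ρ.PosSemidef) :
    0 ≤ (A * ρ).trace := by
  obtain ⟨r, v, rfl⟩ := posSemidef_iff_eq_sum_vecMulVec.mp hρ
  rw [Finset.mul_sum, trace_sum]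
  exact Finset.sum_nonneg fun i _ => by
    rw [trace_mul_vecMulVec]; exact hA.dotProduct_mulVec_nonneg (v i)

theorem IsHermitian.posSemidef_of_re_trace_mul_nonneg (hA : A.IsHermitian)
    (h : ∀ ρ : Matrix m m 𝕜, ρ.PosSemidef → 0 ≤ RCLike.re (A * ρ).trace) : A.PosSemidef := by
  refine .of_dotProduct_mulVec_nonneg hA fun x =>
    RCLike.nonneg_iff.mpr ⟨?_, hA.im_star_dotProduct_mulVec_self x⟩
  simpa only [trace_mul_vecMulVec] using h _ (posSemidef_vecMulVec_self_star x)

theorem re_trace_mul_nonneg_of_re_trace_le_one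
    (h : ∀ ρ : Matrix m m 𝕜, ρ.PosSemidef → RCLike.re ρ.trace ≤ 1 → 0 ≤ RCLike.re (A * ρ).trace)
    (hρ : ρ.PosSemidef) : 0 ≤ RCLike.re (A * ρ).trace := by
  set t := RCLike.re ρ.trace
  have ht : 0 ≤ t := (RCLike.nonneg_iff.mp hρ.trace_nonneg).1
  have hc : 0 < (1 + t)⁻¹ := by positivity
  have hscaled := h ((1 + t)⁻¹ • ρ) (hρ.smul hc.le) <| by
    rw [trace_smul, RCLike.smul_re]
    exact inv_mul_le_one_of_le₀ (by linarith) (by linarith)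
  rw [mul_smul_comm, trace_smul, RCLike.smul_re] at hscaled
  exact nonneg_of_mul_nonneg_right hscaled hc

theorem IsHermitian.posSemidef_iff_re_trace_mul_nonneg (hA : A.IsHermitian) :
    A.PosSemidef ↔
      ∀ ρ : Matrix m m 𝕜, ρ.PosSemidef → RCLike.re ρ.trace ≤ 1 → 0 ≤ RCLike.re (A * ρ).trace :=
  ⟨fun hA' _ hρ _ => (RCLike.nonneg_iff.mp (hA'.trace_mul_nonneg hρ)).1,
    fun h => hA.posSemidef_of_re_trace_mul_nonneg fun _ => re_trace_mul_nonneg_of_re_trace_le_one h⟩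

end Positivity

section WeakestLiberalPrecondition

variable {m ι R : Type*} [Fintype m] [DecidableEq m] [Fintype ι] [CommRing R] [StarRing R]

/-- `WLP(𝓔, N) = I - 𝓔*(I - N)` for the operation `𝓔` with Kraus operators `E`. -/
def wlp (E : ι → Matrix m m R) (N : Matrix m m R) : Matrix m m R :=
  1 - ∑ k, (E k)ᴴ * (1 - N) * E k

theorem isHermitian_wlp (E : ι → Matrix m m R) {N : Matrix m m R} (hN : N.IsHermitian) :
    (wlp E N).IsHermitian :=
  isHermitian_one.sub <| isSelfAdjoint_sum _ fun k _ =>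
    isHermitian_conjTranspose_mul_mul (E k) (isHermitian_one.sub hN)

theorem trace_wlp_sub_mul (E : ι → Matrix m m R) (M N ρ : Matrix m m R) :
    ((wlp E N - M) * ρ).trace =
      ρ.trace - (∑ k, E k * ρ * (E k)ᴴ).trace + (N * ∑ k, E k * ρ * (E k)ᴴ).trace
        - (M * ρ).trace := by
  rw [wlp, sub_mul, sub_mul, one_mul, trace_sub, trace_sub, trace_sum_mul_mul_mul_comm, sub_mul,
    one_mul, trace_sub]
  ring

end WeakestLiberalPrecondition

end Matrix

theorem quantum_duality_partial_general (n : ℕ) (ι : Type*) [Fintype ι]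
    (E : ι → Matrix (Fin n) (Fin n) ℂ)
    (M N : Matrix (Fin n) (Fin n) ℂ)
    (hMh : M.IsHermitian)
    (hNh : N.IsHermitian) :
    (∀ ρ : Matrix (Fin n) (Fin n) ℂ, ρ.PosSemidef → (ρ.trace).re ≤ 1 →
        ((M * ρ).trace).re ≤ ((N * ∑ k, E k * ρ * (E k)ᴴ).trace).re
          + ((ρ.trace).re - ((∑ k, E k * ρ * (E k)ᴴ).trace).re))
      ↔ (((1 : Matrix (Fin n) (Fin n) ℂ)
            - ∑ k, (E k)ᴴ * ((1 : Matrix (Fin n) (Fin n) ℂ) - N) * E k) - M).PosSemidef := by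
  change _ ↔ (wlp E N - M).PosSemidef
  rw [((isHermitian_wlp E hNh).sub hMh).posSemidef_iff_re_trace_mul_nonneg]
  refine forall₂_congr fun ρ _ => imp_congr_right fun _ => ?_
  simp only [trace_wlp_sub_mul, RCLike.re_to_complex, Complex.sub_re, Complex.add_re]
  constructor <;> intro <;> linarith

/-- Quantum duality theorem (partial correctness): with
`WLP(𝓔, N) = I − 𝓔*(I − N)`, the partial correctness condition
`tr(Mρ) ≤ tr(N·𝓔(ρ)) + (tr(ρ) − tr(𝓔(ρ)))` for all partial density
operators `ρ` holds iff `M ⊑ WLP(𝓔, N)`. -/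
theorem quantum_duality_partial (n : ℕ) (ι : Type*) [Fintype ι]
    (E : ι → Matrix (Fin n) (Fin n) ℂ)
    (hE : ((1 : Matrix (Fin n) (Fin n) ℂ) - ∑ k, (E k)ᴴ * E k).PosSemidef)
    (M N : Matrix (Fin n) (Fin n) ℂ)
    (hMh : M.IsHermitian) (hM0 : M.PosSemidef)
    (hM1 : ((1 : Matrix (Fin n) (Fin n) ℂ) - M).PosSemidef)
    (hNh : N.IsHermitian) (hN0 : N.PosSemidef)
    (hN1 : ((1 : Matrix (Fin n) (Fin n) ℂ) - N).PosSemidef) :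
    (∀ ρ : Matrix (Fin n) (Fin n) ℂ, ρ.PosSemidef → (ρ.trace).re ≤ 1 →
        ((M * ρ).trace).re ≤ ((N * ∑ k, E k * ρ * (E k)ᴴ).trace).re
          + ((ρ.trace).re - ((∑ k, E k * ρ * (E k)ᴴ).trace).re))
      ↔ (((1 : Matrix (Fin n) (Fin n) ℂ)
            - ∑ k, (E k)ᴴ * ((1 : Matrix (Fin n) (Fin n) ℂ) - N) * E k) - M).PosSemidef :=
  quantum_duality_partial_general n ι E M N hMh hNh
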